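/- With the setup of the biased-crossover lemma (parent x, mutation rate χ/n, noise rate q/n, Hamming distance d to a fixed target), for every z ∈ {0,1}^n with P[x̃' = z] > 0: E[d(x') | x̃' = z] ≤ d(x) + n·p₃ + (d(z) - d(x))·p₄, where p₃ = (qχ/n²)/((1-χ/n)(1-q/n)+qχ/n²) and p₄ = (1-q/n)(χ/n)/((1-χ/n)(q/n)+(χ/n)(1-q/n)). -/

import Mathlib

open MeasureTheory

/-- Measure on Bool: `true` (a flip) with probability `p`, `false` with probability `1-p`. -/
noncomputable def bernoulliMeasure (p : ℝ) : Measure Bool :=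
  ENNReal.ofReal p • Measure.dirac true + ENNReal.ofReal (1 - p) • Measure.dirac false

instance (p : ℝ) : IsFiniteMeasure (bernoulliMeasure p) := by
  constructor
  simp [bernoulliMeasure, Measure.add_apply, Measure.smul_apply]

/-- Joint distribution of the mutation flip vector and the noise flip vector:
each of the `n` mutation flips happens independently with probability `χ/n`,
each of the `n` noise flips independently with probability `q/n`. -/
noncomputable def mutNoise (n : ℕ) (χ q : ℝ) : Measure ((Fin n → Bool) × (Fin n → Bool)) :=
  (Measure.pi fun _ => bernoulliMeasure (χ / n)).prod
    (Measure.pi fun _ => bernoulliMeasure (q / n))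

/-- The (noiseless) offspring `x'`: parent `x` with the mutation flips applied. -/
def offspring {n : ℕ} (x : Fin n → Bool) (ω : (Fin n → Bool) × (Fin n → Bool)) :
    Fin n → Bool := fun i => Bool.xor (x i) (ω.1 i)

/-- The noisy offspring `x̃'`: offspring with the noise flips applied. -/
def noisyOffspring {n : ℕ} (x : Fin n → Bool) (ω : (Fin n → Bool) × (Fin n → Bool)) :
    Fin n → Bool := fun i => Bool.xor (Bool.xor (x i) (ω.1 i)) (ω.2 i)

/-- Hamming distance. -/
def distToTarget {n : ℕ} (y t : Fin n → Bool) : ℕ :=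
  (Finset.univ.filter fun i => y i ≠ t i).card

/-!
Conditioning on `x̃' = z` keeps the bits independent: the mutation pattern `u` is compatible with
`z` through exactly one noise pattern, so its weight on the event is a product over the bits of
the joint probability of the mutation outcome and of the noise needed there. The conditional
expectation of the additive quantity `d(x')` therefore splits into one posterior expectation per
bit. At a bit, the posterior flip probability is `p₃` if `xᵢ = zᵢ` and `p₄` otherwise, and
comparing the posterior mismatch probability with `[xᵢ ≠ x*ᵢ] + p₃ + ([zᵢ ≠ x*ᵢ] - [xᵢ ≠ x*ᵢ]) p₄`
(which uses only `p₃ ≥ 0`) gives the bound bit by bit.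
-/

open Finset
open scoped ProbabilityTheory

section ProductWeights
variable {ι β : Type*} [Fintype ι] [DecidableEq ι] [Fintype β]

theorem sum_prod_mul_apply (α : ι → β → ℝ) (c : β → ℝ) (k : ι) :
    ∑ u : ι → β, (∏ i, α i (u i)) * c (u k) =
      (∑ v, α k v * c v) * ∏ i ∈ univ.erase k, ∑ v, α i v := by
  -- absorb `c` into the `k`-th factor, then expand the product of sums
  let α' : ι → β → ℝ := Function.update α k fun v => α k v * c v
  have hα'_ne {i : ι} (hi : i ∈ univ.erase k) : α' i = α i :=
    Function.update_of_ne (ne_of_mem_erase hi) _ _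
  have hα' (u : ι → β) : ∏ i, α' i (u i) = (∏ i, α i (u i)) * c (u k) := by
    rw [← mul_prod_erase _ _ (mem_univ k), ← mul_prod_erase _ (fun i => α i (u i)) (mem_univ k),
      prod_congr rfl fun i hi => congrFun (hα'_ne hi) (u i)]
    simp only [α', Function.update_self]
    ring
  simp_rw [← hα', ← Fintype.prod_sum, ← mul_prod_erase _ _ (mem_univ k),
    prod_congr rfl fun i hi => congrArg (fun f => ∑ v, f v) (hα'_ne hi)]
  simp only [α', Function.update_self]

theorem sum_prod_mul_sum_div_sum_prod (α c : ι → β → ℝ) (hα : ∀ i, ∑ v, α i v ≠ 0) :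
    (∑ u : ι → β, (∏ i, α i (u i)) * ∑ k, c k (u k)) / ∑ u : ι → β, ∏ i, α i (u i) =
      ∑ k, (∑ v, α k v * c k v) / ∑ v, α k v := by
  simp_rw [mul_sum]
  rw [sum_comm, ← Fintype.prod_sum, sum_div]
  refine sum_congr rfl fun k _ => ?_
  rw [sum_prod_mul_apply, ← mul_prod_erase _ _ (mem_univ k),
    mul_div_mul_right _ _ (prod_ne_zero_iff.mpr fun i _ => hα i)]

end ProductWeights

section GraphConditioning
variable {α β : Type*} [Fintype α] [Fintype β] [MeasurableSpace α] [MeasurableSpace β]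
  [MeasurableSingletonClass α] [MeasurableSingletonClass β]

theorem integral_cond_graph_eq (μ : Measure (α × β)) [IsFiniteMeasure μ] (g : α → β)
    (f : α × β → ℝ) :
    ∫ ω, f ω ∂μ[|{ω | ω.2 = g ω.1}] =
      (∑ u, μ.real {(u, g u)} * f (u, g u)) / ∑ u, μ.real {(u, g u)} := by
  classical
  let graph : Finset (α × β) := univ.image fun u => (u, g u)
  have hgraph : {ω : α × β | ω.2 = g ω.1} = graph := by
    ext ⟨u, v⟩
    simp [graph, eq_comm]
  have hinj : Set.InjOn (fun u => (u, g u)) (univ : Finset α) :=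
    fun _ _ _ _ h => (Prod.ext_iff.mp h).1
  rw [hgraph, ProbabilityTheory.cond, integral_smul_measure,
    setIntegral_finset _ Integrable.of_finite.integrableOn, ENNReal.toReal_inv, ← measureReal_def,
    ← sum_measureReal_singleton, sum_image hinj, sum_image hinj, smul_eq_mul, inv_mul_eq_div]
  rfl

end GraphConditioning

instance (n : ℕ) (χ q : ℝ) : IsFiniteMeasure (mutNoise n χ q) := by
  unfold mutNoise
  infer_instance

theorem bernoulliMeasure_real_singleton {p : ℝ} (hp0 : 0 ≤ p) (hp1 : p ≤ 1) (v : Bool) :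
    (bernoulliMeasure p).real {v} = if v then p else 1 - p := by
  cases v <;> simp [bernoulliMeasure, measureReal_def, hp0, hp1]

theorem mutNoise_real_singleton {n : ℕ} {χ q : ℝ} (hχ0 : 0 ≤ χ / n) (hχ1 : χ / n ≤ 1)
    (hq0 : 0 ≤ q / n) (hq1 : q / n ≤ 1) (u v : Fin n → Bool) :
    (mutNoise n χ q).real {(u, v)} =
      ∏ i, (if u i then χ / n else 1 - χ / n) * (if v i then q / n else 1 - q / n) := by
  rw [mutNoise, measureReal_def, ← Set.singleton_prod_singleton, Measure.prod_prod,
    ← Set.univ_pi_singleton u, ← Set.univ_pi_singleton v, Measure.pi_pi, Measure.pi_pi,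
    ENNReal.toReal_mul, ENNReal.toReal_prod, ENNReal.toReal_prod, ← prod_mul_distrib]
  simp only [← measureReal_def, bernoulliMeasure_real_singleton hχ0 hχ1,
    bernoulliMeasure_real_singleton hq0 hq1]

theorem setOf_noisyOffspring_eq {n : ℕ} (x z : Fin n → Bool) :
    {ω | noisyOffspring x ω = z} = {ω | ω.2 = fun i => (x i ^^ ω.1 i) ^^ z i} := by
  ext ω
  simp only [Set.mem_ofPred_eq, noisyOffspring, funext_iff]
  exact forall_congr' fun i => by cases x i <;> cases ω.1 i <;> cases ω.2 i <;> cases z i <;> simp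

theorem distToTarget_eq_sum {n : ℕ} (y t : Fin n → Bool) :
    (distToTarget y t : ℝ) = ∑ i, if y i ≠ t i then 1 else 0 :=
  natCast_card_filter _ _

theorem distToTarget_offspring {n : ℕ} (x u v t : Fin n → Bool) :
    (distToTarget (offspring x (u, v)) t : ℝ) = ∑ i, if (x i ^^ u i) ≠ t i then 1 else 0 :=
  distToTarget_eq_sum _ _

/-- Joint probability, at a bit where the parent is `x`, that the mutation outcome is `v`
(`true` = flip) and that the noise then makes the bit read `z`; `a`, `b` are the flip rates. -/
noncomputable def jointBitWeight (a b : ℝ) (x z v : Bool) : ℝ :=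
  (if v then a else 1 - a) * (if (x ^^ v) ^^ z then b else 1 - b)

theorem jointBitWeight_pos {a b : ℝ} (ha0 : 0 < a) (ha1 : a < 1) (hb0 : 0 < b) (hb1 : b < 1)
    (x z v : Bool) : 0 < jointBitWeight a b x z v := by
  unfold jointBitWeight
  apply mul_pos <;> split <;> linarith

theorem posterior_mismatch_le {a b : ℝ} (ha0 : 0 < a) (ha1 : a < 1) (hb0 : 0 < b) (hb1 : b < 1)
    (x z s : Bool) :
    (∑ v, jointBitWeight a b x z v * if (x ^^ v) ≠ s then 1 else 0) /
        ∑ v, jointBitWeight a b x z v ≤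
      (if x ≠ s then 1 else 0) + a * b / ((1 - a) * (1 - b) + a * b) +
        ((if z ≠ s then 1 else 0) - (if x ≠ s then 1 else 0)) *
          ((1 - b) * a / ((1 - a) * b + a * (1 - b))) := by
  have ha : 0 < 1 - a := by linarith
  have hb : 0 < 1 - b := by linarith
  have hp3 : 0 ≤ a * b / ((1 - a) * (1 - b) + a * b) := by positivity
  -- Given the noisy bit, the mutation flipped the bit with probability p₃ if `x = z`, p₄ otherwise.
  have hflip_same : a * b / (a * b + (1 - a) * (1 - b)) = a * b / ((1 - a) * (1 - b) + a * b) := by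
    rw [add_comm]
  have hkeep_same : (1 - a) * (1 - b) / (a * b + (1 - a) * (1 - b)) =
      1 - a * b / ((1 - a) * (1 - b) + a * b) := by
    field_simp
    ring
  have hflip_diff : a * (1 - b) / (a * (1 - b) + (1 - a) * b) =
      (1 - b) * a / ((1 - a) * b + a * (1 - b)) := by
    ring
  have hkeep_diff : (1 - a) * b / (a * (1 - b) + (1 - a) * b) =
      1 - (1 - b) * a / ((1 - a) * b + a * (1 - b)) := by
    field_simp
    ring
  cases x <;> cases z <;> cases s <;>
    simp only [Fintype.sum_bool, jointBitWeight, Bool.true_xor, Bool.false_xor, Bool.xor_true,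
      Bool.xor_false, Bool.not_true, Bool.not_false, ne_eq, Bool.true_eq_false, Bool.false_eq_true,
      not_true_eq_false, not_false_eq_true, if_true, if_false, mul_one, mul_zero, add_zero, zero_add,
      hflip_same, hkeep_same, hflip_diff, hkeep_diff] <;>
    linarith

theorem expected_offspring_distance_upper_bound_general (n : ℕ)
    (x xstar z : Fin n → Bool) (χ q : ℝ)
    (hχ0 : 0 < χ) (hχn : χ < n) (hq0 : 0 < q) (hqn : q < n) :
    ∫ ω, (distToTarget (offspring x ω) xstar : ℝ)
        ∂(ProbabilityTheory.cond (mutNoise n χ q) {ω | noisyOffspring x ω = z}) ≤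
      (distToTarget x xstar : ℝ)
      + n * ((q * χ / n ^ 2) / ((1 - χ / n) * (1 - q / n) + q * χ / n ^ 2))
      + ((distToTarget z xstar : ℝ) - (distToTarget x xstar : ℝ)) *
          (((1 - q / n) * (χ / n)) / ((1 - χ / n) * (q / n) + (χ / n) * (1 - q / n))) := by
  have hn : (0 : ℝ) < n := hχ0.trans hχn
  have ha0 : 0 < χ / n := div_pos hχ0 hn
  have ha1 : χ / n < 1 := (div_lt_one hn).2 hχn
  have hb0 : 0 < q / n := div_pos hq0 hn
  have hb1 : q / n < 1 := (div_lt_one hn).2 hqn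
  have hweight (u : Fin n → Bool) :
      (mutNoise n χ q).real {(u, fun i => (x i ^^ u i) ^^ z i)} =
        ∏ i, jointBitWeight (χ / n) (q / n) (x i) (z i) (u i) :=
    mutNoise_real_singleton ha0.le ha1.le hb0.le hb1.le _ _
  rw [setOf_noisyOffspring_eq,
    integral_cond_graph_eq _ fun (u : Fin n → Bool) i => (x i ^^ u i) ^^ z i]
  simp only [hweight, distToTarget_offspring]
  rw [sum_prod_mul_sum_div_sum_prod (fun i => jointBitWeight (χ / n) (q / n) (x i) (z i))
    (fun k v => if (x k ^^ v) ≠ xstar k then 1 else 0)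
    fun i => (sum_pos (fun v _ => jointBitWeight_pos ha0 ha1 hb0 hb1 _ _ v) univ_nonempty).ne']
  refine (sum_le_sum fun k _ => posterior_mismatch_le ha0 ha1 hb0 hb1 (x k) (z k) (xstar k)).trans
    (le_of_eq ?_)
  have hqχ : q * χ / (n : ℝ) ^ 2 = χ / n * (q / n) := by ring
  simp only [sum_add_distrib, ← sum_mul, sum_sub_distrib, sum_const, card_univ, Fintype.card_fin,
    nsmul_eq_mul, distToTarget_eq_sum, hqχ]

theorem expected_offspring_distance_upper_bound (n : ℕ) (hn : 0 < n)
    (x xstar z : Fin n → Bool) (χ q : ℝ)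
    (hχ0 : 0 < χ) (hχn : χ < n) (hq0 : 0 < q) (hqn : q < n)
    (hz : mutNoise n χ q {ω | noisyOffspring x ω = z} ≠ 0) :
    ∫ ω, (distToTarget (offspring x ω) xstar : ℝ)
        ∂(ProbabilityTheory.cond (mutNoise n χ q) {ω | noisyOffspring x ω = z}) ≤
      (distToTarget x xstar : ℝ)
      + n * ((q * χ / n ^ 2) / ((1 - χ / n) * (1 - q / n) + q * χ / n ^ 2))
      + ((distToTarget z xstar : ℝ) - (distToTarget x xstar : ℝ)) *
          (((1 - q / n) * (χ / n)) / ((1 - χ / n) * (q / n) + (χ / n) * (1 - q / n))) :=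
  expected_offspring_distance_upper_bound_general n x xstar z χ q hχ0 hχn hq0 hqn
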